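/- Let (K, val) be a 2-henselian valued field with residue field F of characteristic ≠ 2, B its valuation ring, A a subring with B ⊆ A ⊆ K, H = val(Aˣ). For g ∈ G and a proper quasi-quadratic module M in F, define Φ(M, g) = {x ∈ A \ {0} : val(x)·g⁻¹ ∈ G², (val(x)·g⁻¹ ∈ H² or val(x) > g), and p.an(x) ∈ M} ∪ {0}. Then Φ(M, g) is a quasi-quadratic module in A. -/

import Mathlib

/-- A (multiplicatively written) valuation on a field `K` with value group `G`:
`v` is multiplicative and satisfies the ultrametric inequality on nonzero elements,
and is surjective onto `G`.  The value at `0` is irrelevant (the paper's `∞`). -/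
structure MulValuation (K : Type*) [Field K] (G : Type*) [CommGroup G] [LinearOrder G] [IsOrderedMonoid G] where
  v : K → G
  map_mul : ∀ ⦃x y : K⦄, x ≠ 0 → y ≠ 0 → v (x * y) = v x * v y
  min_le_map_add : ∀ ⦃x y : K⦄, x ≠ 0 → y ≠ 0 → x + y ≠ 0 → min (v x) (v y) ≤ v (x + y)
  surj : ∀ g : G, ∃ x : K, x ≠ 0 ∧ v x = g

namespace MulValuation

variable {K : Type*} [Field K] {G : Type*} [CommGroup G] [LinearOrder G] [IsOrderedMonoid G]

/-- The valuation ring `B = {x : val x ≥ e} ∪ {0}`, as a set. -/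
def ringSet (V : MulValuation K G) : Set K := {x : K | x = 0 ∨ 1 ≤ V.v x}

/-- `val(Aˣ)`: the set of values of units of a subring `A` of `K`. -/
def unitVals (V : MulValuation K G) (A : Subring K) : Set G :=
  {g : G | ∃ x : K, x ≠ 0 ∧ x ∈ A ∧ x⁻¹ ∈ A ∧ V.v x = g}

end MulValuation

/-- `π : K → F` is a residue homomorphism for `V`: it is a surjective ring
homomorphism on the valuation ring, whose nonvanishing locus on the valuation ring
is exactly the set of units of the valuation ring. -/
def MulValuation.IsResidue {K : Type*} [Field K] {G : Type*} [CommGroup G] [LinearOrder G] [IsOrderedMonoid G]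
    {F : Type*} [Field F] (V : MulValuation K G) (π : K → F) : Prop :=
  π 0 = 0 ∧ π 1 = 1 ∧
  (∀ x y : K, x ∈ V.ringSet → y ∈ V.ringSet → π (x + y) = π x + π y) ∧
  (∀ x y : K, x ∈ V.ringSet → y ∈ V.ringSet → π (x * y) = π x * π y) ∧
  (∀ x : K, x ≠ 0 → x ∈ V.ringSet → (π x ≠ 0 ↔ V.v x = 1)) ∧
  (∀ c : F, ∃ x ∈ V.ringSet, π x = c)

/-- `pan` is a pseudo-angular component map for `V` (with residue map `π`),
i.e. it satisfies conditions (1)-(6) of the paper (stated on nonzero elements). -/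
def MulValuation.IsPseudoAngular {K : Type*} [Field K] {G : Type*} [CommGroup G] [LinearOrder G] [IsOrderedMonoid G]
    {F : Type*} [Field F] (V : MulValuation K G) (π : K → F) (pan : K → F) : Prop :=
  (∀ x : K, x ≠ 0 → pan x ≠ 0) ∧
  (∀ u : K, u ≠ 0 → V.v u = 1 → pan u = π u) ∧
  (∀ u x : K, u ≠ 0 → V.v u = 1 → x ≠ 0 → pan (u * x) = π u * pan x) ∧
  (∀ (g : G) (c : F), c ≠ 0 → ∃ w : K, w ≠ 0 ∧ V.v w = g ∧ pan w = c) ∧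
  (∀ x₁ x₂ : K, x₁ ≠ 0 → x₂ ≠ 0 → x₁ + x₂ ≠ 0 →
    (V.v x₁ < V.v x₂ → pan (x₁ + x₂) = pan x₁) ∧
    (V.v x₁ = V.v x₂ → pan x₁ + pan x₂ ≠ 0 →
      V.v (x₁ + x₂) = V.v x₁ ∧ pan (x₁ + x₂) = pan x₁ + pan x₂)) ∧
  (∀ x y : K, x ≠ 0 → y ≠ 0 → (∃ u : G, V.v x * (V.v y)⁻¹ = u ^ 2) → pan x = pan y →
    ∃ u : K, u ≠ 0 ∧ y = u ^ 2 * x) ∧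
  (∀ a u : K, a ≠ 0 → u ≠ 0 → ∃ k : F, k ≠ 0 ∧ pan (a * u ^ 2) = pan a * k ^ 2)

/-- `Φ^A(M, ⟦g⟧)`: the quasi-quadratic module of `A` generated by `M` and the class of
`g` modulo `H²` where `H = val(Aˣ)`. -/
def MulValuation.Phi {K : Type*} [Field K] {G : Type*} [CommGroup G] [LinearOrder G] [IsOrderedMonoid G]
    {F : Type*} [Field F] (V : MulValuation K G) (A : Subring K) (pan : K → F)
    (M : Set F) (g : G) : Set K :=
  {x : K | x ≠ 0 ∧ x ∈ A ∧ (∃ u : G, V.v x * g⁻¹ = u ^ 2) ∧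
    ((∃ h ∈ V.unitVals A, V.v x * g⁻¹ = h ^ 2) ∨ g < V.v x) ∧ pan x ∈ M} ∪ {0}

/-!
Write `H = val(Aˣ)` and `val(x) * g⁻¹ = u²`. Because `B ⊆ A`, the set `H` is order-convex
below `1`, so the value condition defining `Φ(M, g)` says exactly that `u` lies above some
element of `H`. Every nonzero `a ∈ A` has `val(a)` above an element of `H` (`1` if `a ∈ B`,
and `val(a)` itself if `a⁻¹ ∈ B`), so the condition survives multiplication by `a²`, while
`p.an(a² x)` is `p.an(x)` times a square. For sums, the smaller value and the corresponding
angular component win, unless the values agree and the angular components cancel; that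
cannot happen in `M`, since a proper quasi-quadratic module contains no pair `c, -c` with
`c ≠ 0` once `2` is invertible.
-/

section QuasiQuadraticModule

variable {F : Type*} [Field F] {M : Set F}

theorem eq_zero_of_mem_of_neg_mem (hchar : (2 : F) ≠ 0) (hadd : ∀ c ∈ M, ∀ d ∈ M, c + d ∈ M)
    (hsq : ∀ a : F, ∀ c ∈ M, a ^ 2 * c ∈ M) (hproper : M ≠ Set.univ) {c : F} (hc : c ∈ M)
    (hnc : -c ∈ M) : c = 0 := by
  by_contra hc0
  refine hproper (Set.eq_univ_of_forall fun d => ?_)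
  have hd : d = ((d / c + 1) / 2) ^ 2 * c + ((d / c - 1) / 2) ^ 2 * (-c) := by
    field_simp
    ring
  rw [hd]
  exact hadd _ (hsq _ _ hc) _ (hsq _ _ hnc)

end QuasiQuadraticModule

section OrderedGroup

variable {G : Type*} [CommGroup G] [LinearOrder G] [IsOrderedMonoid G]

theorem exists_sq_and_sq_mem_or_one_lt_iff {H : Set G} (hH₁ : 1 ∈ H)
    (hH : ∀ h ∈ H, ∀ u, h ≤ u → u ≤ 1 → u ∈ H) (w : G) :
    ((∃ u, w = u ^ 2) ∧ ((∃ h ∈ H, w = h ^ 2) ∨ 1 < w)) ↔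
      ∃ u, w = u ^ 2 ∧ u ∈ upperClosure H := by
  simp only [mem_upperClosure]
  constructor
  · rintro ⟨⟨u, rfl⟩, ⟨h, hh, hu⟩ | hu⟩
    · exact ⟨u, rfl, h, hh, ((pow_left_strictMono two_ne_zero).injective hu).ge⟩
    · exact ⟨u, rfl, 1, hH₁, ((one_lt_pow_iff two_ne_zero).mp hu).le⟩
  · rintro ⟨u, rfl, h, hh, hhu⟩
    refine ⟨⟨u, rfl⟩, ?_⟩
    rcases le_or_gt u 1 with hu | hu
    · exact Or.inl ⟨u, hH h hh u hhu hu, rfl⟩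
    · exact Or.inr ((one_lt_pow_iff two_ne_zero).mpr hu)

end OrderedGroup

namespace MulValuation

variable {K : Type*} [Field K] {G : Type*} [CommGroup G] [LinearOrder G] [IsOrderedMonoid G]
  (V : MulValuation K G)

theorem map_one : V.v 1 = 1 := by
  have h := V.map_mul (one_ne_zero' K) one_ne_zero
  rw [mul_one] at h
  exact right_eq_mul.mp h

theorem map_inv {x : K} (hx : x ≠ 0) : V.v x⁻¹ = (V.v x)⁻¹ :=
  eq_inv_of_mul_eq_one_right <| by
    rw [← V.map_mul hx (inv_ne_zero hx), mul_inv_cancel₀ hx, V.map_one]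

theorem map_neg_one : V.v (-1) = 1 :=
  (pow_left_strictMono two_ne_zero).injective <| by
    rw [sq, ← V.map_mul (neg_ne_zero.2 one_ne_zero) (neg_ne_zero.2 one_ne_zero), neg_mul_neg,
      mul_one, V.map_one, one_pow]

theorem map_neg {x : K} (hx : x ≠ 0) : V.v (-x) = V.v x := by
  rw [← neg_one_mul, V.map_mul (neg_ne_zero.2 one_ne_zero) hx, V.map_neg_one, one_mul]

theorem map_add_of_lt {x y : K} (hx : x ≠ 0) (hy : y ≠ 0) (hxy : x + y ≠ 0)
    (h : V.v x < V.v y) : V.v (x + y) = V.v x := by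
  refine le_antisymm ?_ (by simpa [min_eq_left h.le] using V.min_le_map_add hx hy hxy)
  have hx' := V.min_le_map_add hxy (neg_ne_zero.2 hy) (by simpa using hx)
  rw [add_neg_cancel_right, V.map_neg hy] at hx'
  exact (min_le_iff.mp hx').resolve_right h.not_ge

variable {V} {A : Subring K}

theorem one_mem_unitVals : 1 ∈ V.unitVals A :=
  ⟨1, one_ne_zero, A.one_mem, by simp, V.map_one⟩

theorem mul_mem_unitVals {h₁ h₂ : G} (hh₁ : h₁ ∈ V.unitVals A) (hh₂ : h₂ ∈ V.unitVals A) :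
    h₁ * h₂ ∈ V.unitVals A := by
  obtain ⟨a, ha, haA, haiA, rfl⟩ := hh₁
  obtain ⟨b, hb, hbA, hbiA, rfl⟩ := hh₂
  exact ⟨a * b, mul_ne_zero ha hb, A.mul_mem haA hbA, by rw [mul_inv]; exact A.mul_mem haiA hbiA,
    V.map_mul ha hb⟩

theorem mem_unitVals_of_le_of_le_one (hBA : V.ringSet ⊆ A) {h u : G} (hh : h ∈ V.unitVals A)
    (hhu : h ≤ u) (hu : u ≤ 1) : u ∈ V.unitVals A := by
  obtain ⟨b, hb, hbA, -, rfl⟩ := hh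
  obtain ⟨x, hx, rfl⟩ := V.surj u
  have hbx : b⁻¹ * x ∈ A := hBA <| Or.inr <| by
    rw [V.map_mul (inv_ne_zero hb) hx, V.map_inv hb, le_inv_mul_iff_mul_le, mul_one]
    exact hhu
  refine ⟨x, hx, ?_, hBA (Or.inr ?_), rfl⟩
  · simpa [hb] using A.mul_mem hbA hbx
  · rwa [V.map_inv hx, Left.one_le_inv_iff]

theorem map_mem_upperClosure_unitVals (hBA : V.ringSet ⊆ A) {a : K} (ha : a ≠ 0)
    (haA : a ∈ A) : V.v a ∈ upperClosure (V.unitVals A) := by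
  rcases le_total 1 (V.v a) with h | h
  · exact ⟨1, one_mem_unitVals, h⟩
  · refine ⟨V.v a, ⟨a, ha, haA, hBA (Or.inr ?_), rfl⟩, le_rfl⟩
    rwa [V.map_inv ha, Left.one_le_inv_iff]

section Phi

variable {F : Type*} [Field F] {pan : K → F} {M : Set F} {g : G}

theorem mem_Phi_iff (hBA : V.ringSet ⊆ A) {x : K} (hx : x ≠ 0) :
    x ∈ V.Phi A pan M g ↔ x ∈ A ∧
      (∃ u, V.v x * g⁻¹ = u ^ 2 ∧ u ∈ upperClosure (V.unitVals A)) ∧ pan x ∈ M := by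
  have hg : g < V.v x ↔ 1 < V.v x * g⁻¹ := by rw [← div_eq_mul_inv, one_lt_div']
  rw [← exists_sq_and_sq_mem_or_one_lt_iff one_mem_unitVals
    (fun _ hh _ => mem_unitVals_of_le_of_le_one hBA hh), ← hg]
  simp [Phi, hx, and_assoc]

theorem zero_mem_Phi : (0 : K) ∈ V.Phi A pan M g :=
  Set.mem_union_right _ rfl

theorem Phi_subset : V.Phi A pan M g ⊆ A := by
  rintro x (⟨-, hxA, -⟩ | rfl)
  exacts [hxA, A.zero_mem]

theorem mem_Phi_of_map_eq (hBA : V.ringSet ⊆ A) {x y : K} (hx : x ≠ 0) (hy : y ≠ 0)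
    (hxΦ : x ∈ V.Phi A pan M g) (hyA : y ∈ A) (hvy : V.v y = V.v x) (hpy : pan y ∈ M) :
    y ∈ V.Phi A pan M g := by
  rw [mem_Phi_iff hBA hx] at hxΦ
  rw [mem_Phi_iff hBA hy, hvy]
  exact ⟨hyA, hxΦ.2.1, hpy⟩

variable {π : K → F}

theorem sq_mul_mem_Phi (hBA : V.ringSet ⊆ A) (hpan : V.IsPseudoAngular π pan)
    (hsq : ∀ a : F, ∀ c ∈ M, a ^ 2 * c ∈ M) {a x : K} (haA : a ∈ A)
    (hxΦ : x ∈ V.Phi A pan M g) : a ^ 2 * x ∈ V.Phi A pan M g := by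
  obtain ⟨-, -, -, -, -, -, hpan_sq⟩ := hpan
  rcases eq_or_ne (a ^ 2 * x) 0 with hax | hax
  · exact hax ▸ zero_mem_Phi
  obtain ⟨ha, hx⟩ : a ≠ 0 ∧ x ≠ 0 := by simpa using hax
  obtain ⟨hxA, ⟨u, hu, h, hh, hhu⟩, hpx⟩ := (mem_Phi_iff hBA hx).mp hxΦ
  obtain ⟨h', hh', hh'a⟩ := map_mem_upperClosure_unitVals hBA ha haA
  obtain ⟨k, -, hk⟩ := hpan_sq x a hx ha
  refine (mem_Phi_iff hBA hax).mpr ⟨A.mul_mem (A.pow_mem haA 2) hxA,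
    ⟨V.v a * u, ?_, h' * h, mul_mem_unitVals hh' hh, mul_le_mul' hh'a hhu⟩, ?_⟩
  · rw [sq, V.map_mul (mul_ne_zero ha ha) hx, V.map_mul ha ha, mul_assoc, hu, mul_pow,
      sq (V.v a)]
  · rw [mul_comm, hk, mul_comm]
    exact hsq k _ hpx

theorem add_mem_Phi_of_le (hBA : V.ringSet ⊆ A) (hpan : V.IsPseudoAngular π pan)
    (hchar : (2 : F) ≠ 0) (hadd : ∀ c ∈ M, ∀ d ∈ M, c + d ∈ M)
    (hsq : ∀ a : F, ∀ c ∈ M, a ^ 2 * c ∈ M) (hproper : M ≠ Set.univ) {x y : K} (hx : x ≠ 0)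
    (hy : y ≠ 0) (hxy : x + y ≠ 0) (hle : V.v x ≤ V.v y) (hxΦ : x ∈ V.Phi A pan M g)
    (hyΦ : y ∈ V.Phi A pan M g) : x + y ∈ V.Phi A pan M g := by
  obtain ⟨hpan_ne, -, -, -, hpan_add, -, -⟩ := hpan
  have hsumA : x + y ∈ A := A.add_mem (Phi_subset hxΦ) (Phi_subset hyΦ)
  have hpx := ((mem_Phi_iff hBA hx).mp hxΦ).2.2
  have hpy := ((mem_Phi_iff hBA hy).mp hyΦ).2.2
  rcases hle.lt_or_eq with hlt | heq
  · refine mem_Phi_of_map_eq hBA hx hxy hxΦ hsumA (V.map_add_of_lt hx hy hxy hlt) ?_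
    rwa [(hpan_add x y hx hy hxy).1 hlt]
  · have hne : pan x + pan y ≠ 0 := fun h =>
      hpan_ne x hx <| eq_zero_of_mem_of_neg_mem hchar hadd hsq hproper hpx
        (by rwa [← eq_neg_of_add_eq_zero_right h])
    obtain ⟨hv, hp⟩ := (hpan_add x y hx hy hxy).2 heq hne
    exact mem_Phi_of_map_eq hBA hx hxy hxΦ hsumA hv (hp ▸ hadd _ hpx _ hpy)

theorem add_mem_Phi (hBA : V.ringSet ⊆ A) (hpan : V.IsPseudoAngular π pan)
    (hchar : (2 : F) ≠ 0) (hadd : ∀ c ∈ M, ∀ d ∈ M, c + d ∈ M)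
    (hsq : ∀ a : F, ∀ c ∈ M, a ^ 2 * c ∈ M) (hproper : M ≠ Set.univ) {x y : K}
    (hxΦ : x ∈ V.Phi A pan M g) (hyΦ : y ∈ V.Phi A pan M g) : x + y ∈ V.Phi A pan M g := by
  rcases eq_or_ne x 0 with rfl | hx
  · simpa using hyΦ
  rcases eq_or_ne y 0 with rfl | hy
  · simpa using hxΦ
  rcases eq_or_ne (x + y) 0 with hxy | hxy
  · exact hxy ▸ zero_mem_Phi
  rcases le_total (V.v x) (V.v y) with hle | hle
  · exact add_mem_Phi_of_le hBA hpan hchar hadd hsq hproper hx hy hxy hle hxΦ hyΦ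
  · rw [add_comm] at hxy ⊢
    exact add_mem_Phi_of_le hBA hpan hchar hadd hsq hproper hy hx hxy hle hyΦ hxΦ

end Phi

end MulValuation

theorem stmt14_general {K : Type*} [Field K] {G : Type*} [CommGroup G] [LinearOrder G] [IsOrderedMonoid G]
    {F : Type*} [Field F] (V : MulValuation K G) (π : K → F)
    (hchar : (2 : F) ≠ 0)
    (pan : K → F) (hpan : V.IsPseudoAngular π pan)
    (A : Subring K) (hBA : V.ringSet ⊆ (A : Set K))
    (g : G) (M : Set F)
    (hadd : ∀ c ∈ M, ∀ d ∈ M, c + d ∈ M)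
    (hsq : ∀ a : F, ∀ c ∈ M, a ^ 2 * c ∈ M) (hproper : M ≠ Set.univ) :
    -- `Φ(M, g)` is a quasi-quadratic module in `A`
    (0 : K) ∈ V.Phi A pan M g ∧
    V.Phi A pan M g ⊆ (A : Set K) ∧
    (∀ x ∈ V.Phi A pan M g, ∀ y ∈ V.Phi A pan M g, x + y ∈ V.Phi A pan M g) ∧
    (∀ a : K, a ∈ A → ∀ x ∈ V.Phi A pan M g, a ^ 2 * x ∈ V.Phi A pan M g) :=
  ⟨MulValuation.zero_mem_Phi, MulValuation.Phi_subset,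
    fun _ hx _ hy => MulValuation.add_mem_Phi hBA hpan hchar hadd hsq hproper hx hy,
    fun _ ha _ hx => MulValuation.sq_mul_mem_Phi hBA hpan hsq ha hx⟩

theorem stmt14 {K : Type*} [Field K] {G : Type*} [CommGroup G] [LinearOrder G] [IsOrderedMonoid G]
    {F : Type*} [Field F] (V : MulValuation K G) (π : K → F)
    (hres : V.IsResidue π) (hchar : (2 : F) ≠ 0)
    (hsqrt : ∀ x : K, x ≠ 0 → V.v x = 1 → π x = 1 → ∃ y : K, x = y ^ 2)
    (pan : K → F) (hpan : V.IsPseudoAngular π pan)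
    (A : Subring K) (hBA : V.ringSet ⊆ (A : Set K))
    (g : G) (M : Set F)
    (h0 : (0 : F) ∈ M) (hadd : ∀ c ∈ M, ∀ d ∈ M, c + d ∈ M)
    (hsq : ∀ a : F, ∀ c ∈ M, a ^ 2 * c ∈ M) (hproper : M ≠ Set.univ) :
    -- `Φ(M, g)` is a quasi-quadratic module in `A`
    (0 : K) ∈ V.Phi A pan M g ∧
    V.Phi A pan M g ⊆ (A : Set K) ∧
    (∀ x ∈ V.Phi A pan M g, ∀ y ∈ V.Phi A pan M g, x + y ∈ V.Phi A pan M g) ∧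
    (∀ a : K, a ∈ A → ∀ x ∈ V.Phi A pan M g, a ^ 2 * x ∈ V.Phi A pan M g) :=
  stmt14_general V π hchar pan hpan A hBA g M hadd hsq hproper
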